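/- Let G₁ and G₂ be simple connected graphs with n₂ = |V(G₂)| vertices in G₂ and m₁ = |E(G₁)|, m₂ = |E(G₂)| edges. Then the F-index of the edge Q-join satisfies F(G₁ ∨̱_Q G₂) = F(G₁) + F(G₂) + 3n₂²M₁(G₁) + 3m₁M₁(G₂) + M₄(G₁) + 3n₂HM(G₁) + 3ReZM(G₁) + m₁²(6m₂ + m₁n₂) + m₁n₂³. -/

import Mathlib

/-- The subdivision graph `S(G)`: a new vertex is inserted into each edge of `G`
(each edge is replaced by a path of length 2). The inserted vertices form the
right summand `↥G.edgeSet`. -/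
def Sgraph {V : Type*} (G : SimpleGraph V) : SimpleGraph (V ⊕ ↥G.edgeSet) where
  Adj x y :=
    match x, y with
    | Sum.inl v, Sum.inr e => v ∈ (e : Sym2 V)
    | Sum.inr e, Sum.inl v => v ∈ (e : Sym2 V)
    | _, _ => False
  symm := by constructor; rintro (v | e) (w | f) h <;> exact h
  loopless := by constructor; rintro (v | e) h <;> exact h

/-- The graph `R(G)`: obtained from `G` by inserting a new vertex into each edge of `G`
and joining each new vertex to the end vertices of its corresponding edge. -/
def Rgraph {V : Type*} (G : SimpleGraph V) : SimpleGraph (V ⊕ ↥G.edgeSet) where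
  Adj x y :=
    match x, y with
    | Sum.inl v, Sum.inl w => G.Adj v w
    | Sum.inl v, Sum.inr e => v ∈ (e : Sym2 V)
    | Sum.inr e, Sum.inl v => v ∈ (e : Sym2 V)
    | Sum.inr _, Sum.inr _ => False
  symm := by
    constructor
    rintro (v | e) (w | f) h
    · exact G.adj_symm h
    · exact h
    · exact h
    · exact h
  loopless := by
    constructor
    rintro (v | e) h
    · exact G.irrefl h
    · exact h

/-- The graph `Q(G)`: obtained from `G` by inserting a new vertex into each edge of `G`,
then joining by edges those pairs of new vertices lying on adjacent edges of `G`. -/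
def Qgraph {V : Type*} (G : SimpleGraph V) : SimpleGraph (V ⊕ ↥G.edgeSet) where
  Adj x y :=
    match x, y with
    | Sum.inl _, Sum.inl _ => False
    | Sum.inl v, Sum.inr e => v ∈ (e : Sym2 V)
    | Sum.inr e, Sum.inl v => v ∈ (e : Sym2 V)
    | Sum.inr e, Sum.inr f => e ≠ f ∧ ∃ v, v ∈ (e : Sym2 V) ∧ v ∈ (f : Sym2 V)
  symm := by
    constructor
    rintro (v | e) (w | f) h
    · exact h
    · exact h
    · exact h
    · exact ⟨h.1.symm, by obtain ⟨v, h1, h2⟩ := h.2; exact ⟨v, h2, h1⟩⟩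
  loopless := by
    constructor
    rintro (v | e) h
    · exact h
    · exact h.1 rfl

/-- The total graph `T(G)`: obtained from `G` by inserting a new vertex into each edge,
joining each new vertex to the end vertices of its corresponding edge, and joining by
edges those pairs of new vertices lying on adjacent edges of `G`. -/
def Tgraph {V : Type*} (G : SimpleGraph V) : SimpleGraph (V ⊕ ↥G.edgeSet) where
  Adj x y :=
    match x, y with
    | Sum.inl v, Sum.inl w => G.Adj v w
    | Sum.inl v, Sum.inr e => v ∈ (e : Sym2 V)
    | Sum.inr e, Sum.inl v => v ∈ (e : Sym2 V)
    | Sum.inr e, Sum.inr f => e ≠ f ∧ ∃ v, v ∈ (e : Sym2 V) ∧ v ∈ (f : Sym2 V)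
  symm := by
    constructor
    rintro (v | e) (w | f) h
    · exact G.adj_symm h
    · exact h
    · exact h
    · exact ⟨h.1.symm, by obtain ⟨v, h1, h2⟩ := h.2; exact ⟨v, h2, h1⟩⟩
  loopless := by
    constructor
    rintro (v | e) h
    · exact G.irrefl h
    · exact h.1 rfl

/-- The disjoint union of `H` and `K` together with all edges joining a vertex `a` of `H`
with `P a` to every vertex of `K`. -/
def joinOn {A B : Type*} (H : SimpleGraph A) (K : SimpleGraph B) (P : A → Prop) :
    SimpleGraph (A ⊕ B) where
  Adj x y :=
    match x, y with
    | Sum.inl a, Sum.inl a' => H.Adj a a'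
    | Sum.inr b, Sum.inr b' => K.Adj b b'
    | Sum.inl a, Sum.inr _ => P a
    | Sum.inr _, Sum.inl a => P a
  symm := by
    constructor
    rintro (a | b) (a' | b') h
    · exact H.adj_symm h
    · exact h
    · exact h
    · exact K.adj_symm h
  loopless := by
    constructor
    rintro (a | b) h
    · exact H.irrefl h
    · exact K.irrefl h

/-- The vertex S-join `G₁ ∨̇_S G₂`: obtained from `S(G₁)` and `G₂` by joining each vertex
of `V(G₁)` to every vertex of `G₂`. -/
def vertexSJoin {V₁ V₂ : Type*} (G₁ : SimpleGraph V₁) (G₂ : SimpleGraph V₂) :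
    SimpleGraph ((V₁ ⊕ ↥G₁.edgeSet) ⊕ V₂) :=
  joinOn (Sgraph G₁) G₂ (fun x => x.isLeft)

/-- The edge S-join `G₁ ∨̱_S G₂`: obtained from `S(G₁)` and `G₂` by joining each inserted
vertex (each vertex of `I(G₁)`) to every vertex of `G₂`. -/
def edgeSJoin {V₁ V₂ : Type*} (G₁ : SimpleGraph V₁) (G₂ : SimpleGraph V₂) :
    SimpleGraph ((V₁ ⊕ ↥G₁.edgeSet) ⊕ V₂) :=
  joinOn (Sgraph G₁) G₂ (fun x => x.isRight)

/-- The vertex R-join `G₁ ∨̇_R G₂`. -/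
def vertexRJoin {V₁ V₂ : Type*} (G₁ : SimpleGraph V₁) (G₂ : SimpleGraph V₂) :
    SimpleGraph ((V₁ ⊕ ↥G₁.edgeSet) ⊕ V₂) :=
  joinOn (Rgraph G₁) G₂ (fun x => x.isLeft)

/-- The edge R-join `G₁ ∨̱_R G₂`. -/
def edgeRJoin {V₁ V₂ : Type*} (G₁ : SimpleGraph V₁) (G₂ : SimpleGraph V₂) :
    SimpleGraph ((V₁ ⊕ ↥G₁.edgeSet) ⊕ V₂) :=
  joinOn (Rgraph G₁) G₂ (fun x => x.isRight)

/-- The vertex Q-join `G₁ ∨̇_Q G₂`. -/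
def vertexQJoin {V₁ V₂ : Type*} (G₁ : SimpleGraph V₁) (G₂ : SimpleGraph V₂) :
    SimpleGraph ((V₁ ⊕ ↥G₁.edgeSet) ⊕ V₂) :=
  joinOn (Qgraph G₁) G₂ (fun x => x.isLeft)

/-- The edge Q-join `G₁ ∨̱_Q G₂`. -/
def edgeQJoin {V₁ V₂ : Type*} (G₁ : SimpleGraph V₁) (G₂ : SimpleGraph V₂) :
    SimpleGraph ((V₁ ⊕ ↥G₁.edgeSet) ⊕ V₂) :=
  joinOn (Qgraph G₁) G₂ (fun x => x.isRight)

/-- The vertex T-join `G₁ ∨̇_T G₂`. -/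
def vertexTJoin {V₁ V₂ : Type*} (G₁ : SimpleGraph V₁) (G₂ : SimpleGraph V₂) :
    SimpleGraph ((V₁ ⊕ ↥G₁.edgeSet) ⊕ V₂) :=
  joinOn (Tgraph G₁) G₂ (fun x => x.isLeft)

/-- The edge T-join `G₁ ∨̱_T G₂`. -/
def edgeTJoin {V₁ V₂ : Type*} (G₁ : SimpleGraph V₁) (G₂ : SimpleGraph V₂) :
    SimpleGraph ((V₁ ⊕ ↥G₁.edgeSet) ⊕ V₂) :=
  joinOn (Tgraph G₁) G₂ (fun x => x.isRight)

/-- Degree of a vertex in a graph on a finite vertex type. -/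
noncomputable def gdeg {V : Type*} [Finite V] (G : SimpleGraph V) (v : V) : ℕ :=
  haveI : Fintype ↥(G.neighborSet v) := Fintype.ofFinite _
  G.degree v

/-- The forgotten topological index (F-index): `F(G) = ∑_{v ∈ V(G)} d_G(v)³`. -/
noncomputable def Findex {V : Type*} [Finite V] (G : SimpleGraph V) : ℕ :=
  haveI := Fintype.ofFinite V
  ∑ v : V, gdeg G v ^ 3

/-- The first Zagreb index: `M₁(G) = ∑_{v ∈ V(G)} d_G(v)²`. -/
noncomputable def M1 {V : Type*} [Finite V] (G : SimpleGraph V) : ℕ :=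
  haveI := Fintype.ofFinite V
  ∑ v : V, gdeg G v ^ 2

/-- `M₄(G) = ∑_{v ∈ V(G)} d_G(v)⁴`. -/
noncomputable def M4 {V : Type*} [Finite V] (G : SimpleGraph V) : ℕ :=
  haveI := Fintype.ofFinite V
  ∑ v : V, gdeg G v ^ 4

/-- The hyper Zagreb index: `HM(G) = ∑_{uv ∈ E(G)} (d_G(u) + d_G(v))²`. -/
noncomputable def HM {V : Type*} [Finite V] (G : SimpleGraph V) : ℕ :=
  haveI : Fintype ↥G.edgeSet := Fintype.ofFinite _
  ∑ e : ↥G.edgeSet,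
    Sym2.lift ⟨fun u v => (gdeg G u + gdeg G v) ^ 2,
      fun u v => by dsimp only; rw [add_comm]⟩ (e : Sym2 V)

/-- The redefined Zagreb index:
`ReZM(G) = ∑_{uv ∈ E(G)} d_G(u) d_G(v) (d_G(u) + d_G(v))`. -/
noncomputable def ReZM {V : Type*} [Finite V] (G : SimpleGraph V) : ℕ :=
  haveI : Fintype ↥G.edgeSet := Fintype.ofFinite _
  ∑ e : ↥G.edgeSet,
    Sym2.lift ⟨fun u v => gdeg G u * gdeg G v * (gdeg G u + gdeg G v),
      fun u v => by dsimp only; ring⟩ (e : Sym2 V)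

/-- The number of edges of `G`. -/
noncomputable def numEdges {V : Type*} (G : SimpleGraph V) : ℕ :=
  Nat.card ↥G.edgeSet

/-
In `G₁ ∨̱_Q G₂` an original vertex `v` of `G₁` keeps its degree `d(v)`, a vertex `b` of `G₂` gains
the `m₁` inserted vertices, and the vertex inserted into the edge `uv` of `G₁` has degree
`d(u) + d(v) + n₂`: two ends, `d(u) + d(v) - 2` inserted vertices on adjacent edges, and all of `G₂`.
Expanding the cubes leaves the edge sums `∑_{uv} (d(u) + d(v))ᵏ`, which are `M₁`, `HM` and
`M₄ + 3 ReZM` for `k = 1, 2, 3` by the weighted handshake identity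
`∑_{uv ∈ E} (f(u) + f(v)) = ∑_v d(v) f(v)`, together with `∑_{b ∈ V₂} d(b) = 2 m₂`.
-/

open Finset

section Degree

variable {V : Type*} [Finite V] (G : SimpleGraph V)

lemma gdeg_eq_degree (v : V) [Fintype (G.neighborSet v)] : gdeg G v = G.degree v := by
  unfold gdeg
  congr
  exact Subsingleton.elim _ _

lemma gdeg_eq_natCard (v : V) : gdeg G v = Nat.card {w // G.Adj v w} := by
  have := Fintype.ofFinite (G.neighborSet v)
  rw [gdeg_eq_degree, ← SimpleGraph.card_neighborSet_eq_degree, ← Nat.card_eq_fintype_card]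
  rfl

lemma natCard_incident_edges (v : V) :
    Nat.card {e : G.edgeSet // v ∈ (e : Sym2 V)} = gdeg G v := by
  classical
  have := Fintype.ofFinite V
  rw [gdeg_eq_degree, ← SimpleGraph.card_incidenceSet_eq_degree, ← Nat.card_eq_fintype_card]
  exact Nat.card_congr (Equiv.subtypeSubtypeEquivSubtypeInter (· ∈ G.edgeSet) (v ∈ ·))

noncomputable def edgeDegSum : Sym2 V → ℕ :=
  Sym2.lift ⟨fun u v => gdeg G u + gdeg G v, fun _ _ => add_comm _ _⟩

end Degree

lemma natCard_sum_subtype {A B : Type*} [Finite A] [Finite B] (p : A ⊕ B → Prop) :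
    Nat.card {x // p x} = Nat.card {a // p (.inl a)} + Nat.card {b // p (.inr b)} := by
  rw [Nat.card_congr Equiv.subtypeSum, Nat.card_sum]

lemma natCard_isRight {A B : Type*} [Finite A] [Finite B] :
    Nat.card {x : A ⊕ B // x.isRight} = Nat.card B := by
  simp [natCard_sum_subtype]

section JoinOn

variable {A B : Type*} [Finite A] [Finite B] (H : SimpleGraph A) (K : SimpleGraph B) (P : A → Prop)

lemma gdeg_joinOn_inl_of_pos {a : A} (ha : P a) :
    gdeg (joinOn H K P) (.inl a) = gdeg H a + Nat.card B := by
  rw [gdeg_eq_natCard, natCard_sum_subtype, gdeg_eq_natCard]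
  exact congrArg _ (Nat.card_congr (Equiv.subtypeUnivEquiv fun _ => ha))

lemma gdeg_joinOn_inl_of_neg {a : A} (ha : ¬P a) :
    gdeg (joinOn H K P) (.inl a) = gdeg H a := by
  have h_none : Nat.card {b : B // (joinOn H K P).Adj (.inl a) (.inr b)} = 0 :=
    @Nat.card_of_isEmpty _ ⟨fun b => ha b.2⟩
  rw [gdeg_eq_natCard, natCard_sum_subtype, gdeg_eq_natCard, h_none, add_zero]
  rfl

lemma gdeg_joinOn_inr (b : B) :
    gdeg (joinOn H K P) (.inr b) = gdeg K b + Nat.card {a // P a} := by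
  rw [gdeg_eq_natCard, natCard_sum_subtype, gdeg_eq_natCard, add_comm]
  rfl

end JoinOn

section Qgraph

variable {V : Type*} [Finite V] (G : SimpleGraph V)

lemma gdeg_Qgraph_inl (v : V) : gdeg (Qgraph G) (.inl v) = gdeg G v := by
  have h_none : Nat.card {w : V // (Qgraph G).Adj (.inl v) (.inl w)} = 0 :=
    @Nat.card_of_isEmpty _ ⟨fun w => w.2⟩
  rw [gdeg_eq_natCard, natCard_sum_subtype, ← natCard_incident_edges, h_none, zero_add]
  rfl

lemma natCard_adjacent_edges_add_two {u v : V} (e : G.edgeSet) (he : (e : Sym2 V) = s(u, v)) :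
    Nat.card {f : G.edgeSet // e ≠ f ∧ ∃ w, w ∈ (e : Sym2 V) ∧ w ∈ (f : Sym2 V)} + 2
      = gdeg G u + gdeg G v := by
  classical
  have := Fintype.ofFinite G.edgeSet
  have huv : u ≠ v := (G.mem_edgeSet.mp (he ▸ e.2)).ne
  let incident (x : V) : Finset G.edgeSet := {f | x ∈ (f : Sym2 V)}
  have h_card (x : V) : (incident x).card = gdeg G x := by
    rw [← natCard_incident_edges, Nat.card_eq_fintype_card, Fintype.card_subtype]
  have h_mem (x : V) (hx : x ∈ (e : Sym2 V)) : e ∈ incident x := by simpa [incident]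
  -- An edge other than `e` meets `e` in at most one of its two ends.
  have h_disj : Disjoint ((incident u).erase e) ((incident v).erase e) := by
    refine disjoint_left.mpr fun f hfu hfv => (mem_erase.mp hfu).1 (Subtype.ext ?_)
    simp only [incident, mem_erase, mem_filter, mem_univ, true_and] at hfu hfv
    rw [he, ← Sym2.mem_and_mem_iff huv]
    exact ⟨hfu.2, hfv.2⟩
  have h_split : ({f | e ≠ f ∧ ∃ w, w ∈ (e : Sym2 V) ∧ w ∈ (f : Sym2 V)} : Finset G.edgeSet)
      = (incident u).erase e ∪ (incident v).erase e := by
    ext f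
    simp [incident, he, ne_comm, and_or_left]
  rw [Nat.card_eq_fintype_card, Fintype.card_subtype, h_split, card_union_of_disjoint h_disj,
    ← h_card, ← h_card, ← card_erase_add_one (h_mem u (by simp [he])),
    ← card_erase_add_one (h_mem v (by simp [he]))]
  ring

lemma gdeg_Qgraph_inr (e : G.edgeSet) : gdeg (Qgraph G) (.inr e) = edgeDegSum G e := by
  obtain ⟨⟨u, v⟩, he⟩ := Quot.exists_rep (e : Sym2 V)
  replace he : (e : Sym2 V) = s(u, v) := he.symm
  have huv : u ≠ v := (G.mem_edgeSet.mp (he ▸ e.2)).ne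
  have h_ends : Nat.card {w : V // (Qgraph G).Adj (.inr e) (.inl w)} = 2 := by
    rw [← Set.ncard_pair huv, ← Nat.card_coe_set_eq]
    exact Nat.card_congr (Equiv.subtypeEquivRight fun w => by
      change w ∈ (e : Sym2 V) ↔ _
      simp [he])
  rw [gdeg_eq_natCard, natCard_sum_subtype, h_ends, add_comm, he]
  exact natCard_adjacent_edges_add_two G e he

end Qgraph

section Indices

variable {V : Type*} [Fintype V] (G : SimpleGraph V)

lemma Findex_eq_sum : Findex G = ∑ v, gdeg G v ^ 3 := by
  rw [Findex, Subsingleton.elim (Fintype.ofFinite V) ‹_›]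

lemma M1_eq_sum : M1 G = ∑ v, gdeg G v ^ 2 := by
  rw [M1, Subsingleton.elim (Fintype.ofFinite V) ‹_›]

lemma M4_eq_sum : M4 G = ∑ v, gdeg G v ^ 4 := by
  rw [M4, Subsingleton.elim (Fintype.ofFinite V) ‹_›]

lemma sum_gdeg : ∑ v, gdeg G v = 2 * numEdges G := by
  classical
  simp_rw [gdeg_eq_degree]
  rw [SimpleGraph.sum_degrees_eq_twice_card_edges, SimpleGraph.edgeFinset_card, numEdges,
    Nat.card_eq_fintype_card]

variable [Fintype G.edgeSet]

lemma sum_edgeSet_lift_add {M : Type*} [AddCommMonoid M] (g : V → M) :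
    ∑ e : G.edgeSet, Sym2.lift ⟨fun u v => g u + g v, fun _ _ => add_comm _ _⟩ (e : Sym2 V)
      = ∑ v, gdeg G v • g v := by
  classical
  have h_edge : ∀ e ∈ G.edgeFinset,
      Sym2.lift ⟨fun u v => g u + g v, fun _ _ => add_comm _ _⟩ e = ∑ v with v ∈ e, g v := by
    intro e he
    induction e with
    | _ a b =>
      have hab : G.Adj a b := SimpleGraph.mem_edgeFinset.mp he
      rw [show ({v | v ∈ s(a, b)} : Finset V) = {a, b} by ext; simp, sum_pair hab.ne]
      rfl
  rw [sum_set_coe (f := Sym2.lift _)]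
  change ∑ e ∈ G.edgeFinset, _ = _
  rw [sum_congr rfl h_edge]
  simp_rw [sum_filter]
  rw [sum_comm]
  refine sum_congr rfl fun v _ => ?_
  rw [← sum_filter, sum_const, ← SimpleGraph.incidenceFinset_eq_filter,
    SimpleGraph.card_incidenceFinset_eq_degree, gdeg_eq_degree]

lemma M1_eq_sum_edgeDegSum : M1 G = ∑ e : G.edgeSet, edgeDegSum G e := by
  rw [M1_eq_sum, edgeDegSum, sum_edgeSet_lift_add]
  simp only [smul_eq_mul, sq]

lemma HM_eq_sum_edgeDegSum_sq : HM G = ∑ e : G.edgeSet, edgeDegSum G e ^ 2 := by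
  rw [HM, Subsingleton.elim (Fintype.ofFinite G.edgeSet) ‹_›]
  refine sum_congr rfl fun e _ => ?_
  induction (e : Sym2 V) using Sym2.ind
  rfl

lemma sum_edgeDegSum_pow_three : ∑ e : G.edgeSet, edgeDegSum G e ^ 3 = M4 G + 3 * ReZM G := by
  have h_M4 : M4 G = ∑ e : G.edgeSet,
      Sym2.lift ⟨fun u v => gdeg G u ^ 3 + gdeg G v ^ 3, fun _ _ => add_comm _ _⟩ (e : Sym2 V) := by
    rw [sum_edgeSet_lift_add, M4_eq_sum]
    simp only [smul_eq_mul, ← pow_succ']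
  rw [h_M4, ReZM, Subsingleton.elim (Fintype.ofFinite G.edgeSet) ‹_›, mul_sum, ← sum_add_distrib]
  refine sum_congr rfl fun e _ => ?_
  induction (e : Sym2 V) using Sym2.ind with
  | _ u v =>
    simp only [edgeDegSum, Sym2.lift_mk]
    ring

end Indices

lemma sum_add_const_pow_three {ι R : Type*} [Fintype ι] [CommSemiring R] (f : ι → R) (c : R) :
    ∑ i, (f i + c) ^ 3
      = ∑ i, f i ^ 3 + 3 * c * ∑ i, f i ^ 2 + 3 * c ^ 2 * ∑ i, f i + Fintype.card ι * c ^ 3 := by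
  have h_cube : ∀ i, (f i + c) ^ 3 = f i ^ 3 + 3 * c * f i ^ 2 + 3 * c ^ 2 * f i + c ^ 3 :=
    fun i => by ring
  simp only [h_cube, sum_add_distrib, mul_sum, sum_const, card_univ, nsmul_eq_mul]

lemma Findex_edgeQJoin_eq_sum {V₁ V₂ : Type*} [Fintype V₁] [Fintype V₂]
    (G₁ : SimpleGraph V₁) (G₂ : SimpleGraph V₂) [Fintype G₁.edgeSet] :
    Findex (edgeQJoin G₁ G₂) = Findex G₁ + ∑ e : G₁.edgeSet, (edgeDegSum G₁ e + Nat.card V₂) ^ 3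
      + ∑ b, (gdeg G₂ b + numEdges G₁) ^ 3 := by
  have h_vertices (v : V₁) : gdeg (edgeQJoin G₁ G₂) (.inl (.inl v)) = gdeg G₁ v := by
    rw [edgeQJoin, gdeg_joinOn_inl_of_neg _ _ _ (by simp), gdeg_Qgraph_inl]
  have h_inserted (e : G₁.edgeSet) :
      gdeg (edgeQJoin G₁ G₂) (.inl (.inr e)) = edgeDegSum G₁ e + Nat.card V₂ := by
    rw [edgeQJoin, gdeg_joinOn_inl_of_pos _ _ _ (by simp), gdeg_Qgraph_inr]
  have h_joined (b : V₂) : gdeg (edgeQJoin G₁ G₂) (.inr b) = gdeg G₂ b + numEdges G₁ := by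
    rw [edgeQJoin, gdeg_joinOn_inr, natCard_isRight, numEdges]
  simp only [Findex_eq_sum, Fintype.sum_sum_type, h_vertices, h_inserted, h_joined]

theorem Findex_edgeQJoin_general {V₁ V₂ : Type*} [Finite V₁] [Finite V₂]
    (G₁ : SimpleGraph V₁) (G₂ : SimpleGraph V₂)
    (n₂ m₁ m₂ : ℕ)
    (hn₂ : n₂ = Nat.card V₂)
    (hm₁ : m₁ = numEdges G₁) (hm₂ : m₂ = numEdges G₂) :
    (Findex (edgeQJoin G₁ G₂) : ℤ) =
      (Findex G₁ : ℤ) + (Findex G₂ : ℤ) + 3 * (n₂ : ℤ) ^ 2 * (M1 G₁ : ℤ) + 3 * (m₁ : ℤ) * (M1 G₂ : ℤ)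
        + (M4 G₁ : ℤ) + 3 * (n₂ : ℤ) * (HM G₁ : ℤ) + 3 * (ReZM G₁ : ℤ)
        + (m₁ : ℤ) ^ 2 * (6 * (m₂ : ℤ) + (m₁ : ℤ) * (n₂ : ℤ)) + (m₁ : ℤ) * (n₂ : ℤ) ^ 3 := by
  have := Fintype.ofFinite V₁
  have := Fintype.ofFinite V₂
  have := Fintype.ofFinite G₁.edgeSet
  have h_card_edges : Fintype.card G₁.edgeSet = m₁ := by
    rw [hm₁, numEdges, Nat.card_eq_fintype_card]
  have h_card_vertices : Fintype.card V₂ = n₂ := by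
    rw [hn₂, Nat.card_eq_fintype_card]
  rw [Findex_edgeQJoin_eq_sum, ← hn₂, ← hm₁, sum_add_const_pow_three, sum_add_const_pow_three,
    sum_edgeDegSum_pow_three, ← HM_eq_sum_edgeDegSum_sq, ← M1_eq_sum_edgeDegSum, ← Findex_eq_sum,
    ← M1_eq_sum, sum_gdeg, ← hm₂, h_card_edges, h_card_vertices]
  push_cast
  ring

theorem Findex_edgeQJoin {V₁ V₂ : Type*} [Finite V₁] [Finite V₂]
    (G₁ : SimpleGraph V₁) (G₂ : SimpleGraph V₂)
    (hc₁ : G₁.Connected) (hc₂ : G₂.Connected)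
    (n₂ m₁ m₂ : ℕ)
    (hn₂ : n₂ = Nat.card V₂)
    (hm₁ : m₁ = numEdges G₁) (hm₂ : m₂ = numEdges G₂) :
    (Findex (edgeQJoin G₁ G₂) : ℤ) =
      (Findex G₁ : ℤ) + (Findex G₂ : ℤ) + 3 * (n₂ : ℤ) ^ 2 * (M1 G₁ : ℤ) + 3 * (m₁ : ℤ) * (M1 G₂ : ℤ)
        + (M4 G₁ : ℤ) + 3 * (n₂ : ℤ) * (HM G₁ : ℤ) + 3 * (ReZM G₁ : ℤ)
        + (m₁ : ℤ) ^ 2 * (6 * (m₂ : ℤ) + (m₁ : ℤ) * (n₂ : ℤ)) + (m₁ : ℤ) * (n₂ : ℤ) ^ 3 :=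
  Findex_edgeQJoin_general G₁ G₂ n₂ m₁ m₂ hn₂ hm₁ hm₂
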